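/- Kernel of the Wolff state map: let S₁,…,S_{n−k} be a basis of a subspace S ≤ V = (𝔽₂²)ⁿ and 0 ≤ i ≤ n. The map fᵢ : S^⊥ → 𝔽₂^{n−k} defined by fᵢ(P) = (ω(Sⱼ, πᵢ(P)))_{j=1}^{n−k} is 𝔽₂-linear, its kernel equals Cᵢᵖ + Cᵢᶠ, and Cᵢᵖ ∩ Cᵢᶠ = {0} (so the kernel is the internal direct sum of the past and future subgroups). -/

import Mathlib

/-- `V = (𝔽₂²)ⁿ`, the additive group underlying the effective Pauli group `Gₙ`. -/
abbrev PV (n : ℕ) := Fin n → ZMod 2 × ZMod 2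

/-- The symplectic form `ω(v,w) = Σᵢ (aᵢb′ᵢ + a′ᵢbᵢ)` over `𝔽₂`. -/
def sympOmega {n : ℕ} (v w : PV n) : ZMod 2 :=
  ∑ i, ((v i).1 * (w i).2 + (w i).1 * (v i).2)

lemma sympOmega_add_left {n : ℕ} (a b w : PV n) :
    sympOmega (a + b) w = sympOmega a w + sympOmega b w := by
  unfold sympOmega
  rw [← Finset.sum_add_distrib]
  refine Finset.sum_congr rfl fun i _ => ?_
  simp [Prod.fst_add, Prod.snd_add, add_mul, mul_add]
  ring

lemma sympOmega_smul_left {n : ℕ} (c : ZMod 2) (a w : PV n) :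
    sympOmega (c • a) w = c * sympOmega a w := by
  unfold sympOmega
  rw [Finset.mul_sum]
  refine Finset.sum_congr rfl fun i _ => ?_
  simp [Prod.smul_fst, Prod.smul_snd, smul_eq_mul]
  ring

/-- The symplectic orthogonal `S^⊥ = {P ∈ V : ω(P,Q) = 0 for all Q ∈ S}`. -/
def sPerp {n : ℕ} (S : Submodule (ZMod 2) (PV n)) : Submodule (ZMod 2) (PV n) where
  carrier := {P | ∀ Q ∈ S, sympOmega P Q = 0}
  add_mem' := by
    intro a b ha hb Q hQ
    rw [sympOmega_add_left, ha Q hQ, hb Q hQ, add_zero]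
  zero_mem' := by
    intro Q hQ
    simp [sympOmega]
  smul_mem' := by
    intro c a ha Q hQ
    rw [sympOmega_smul_left, ha Q hQ, mul_zero]

/-- The truncation map `πᵢ : V → V`, `(P₁,…,Pₙ) ↦ (P₁,…,Pᵢ,0,…,0)`. -/
def trunc (n i : ℕ) : PV n →ₗ[ZMod 2] PV n where
  toFun v := fun j => if (j : ℕ) < i then v j else 0
  map_add' := by
    intro a b
    funext j
    by_cases h : (j : ℕ) < i <;> simp [h]
  map_smul' := by
    intro c a
    funext j
    by_cases h : (j : ℕ) < i <;> simp [h]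

/-!
`fᵢ(P) = 0` says that `πᵢ(P)` is orthogonal to every `Sⱼ`, hence to their span `S`, i.e.
`πᵢ(P) ∈ S^⊥`. As `πᵢ` is idempotent, `P = πᵢ(P) + (P - πᵢ(P))` is a past plus a future vector,
and both summands lie in `S^⊥` exactly when `πᵢ(P)` does. A vector that is both past and future
satisfies `P = πᵢ(P) = 0`.
-/

section Projection

variable {R M : Type*} [Ring R] [AddCommGroup M] [Module R M]

lemma ker_id_sub_inf_ker_eq_bot (f : M →ₗ[R] M) :
    LinearMap.ker (LinearMap.id - f) ⊓ LinearMap.ker f = ⊥ := by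
  refine eq_bot_iff.2 fun x ⟨hx₁, hx₂⟩ => ?_
  rw [SetLike.mem_coe, LinearMap.mem_ker, LinearMap.sub_apply, LinearMap.id_apply,
    sub_eq_zero] at hx₁
  rw [Submodule.mem_bot, hx₁, hx₂]

lemma mem_inf_ker_id_sub_sup_inf_ker_iff {f : M →ₗ[R] M} (hf : IsIdempotentElem f)
    (W : Submodule R M) {x : M} :
    x ∈ (W ⊓ LinearMap.ker (LinearMap.id - f)) ⊔ (W ⊓ LinearMap.ker f) ↔ x ∈ W ∧ f x ∈ W := by
  have hff (y : M) : f (f y) = f y := congr($hf y)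
  constructor
  · intro hx
    obtain ⟨y, ⟨hyW, hy⟩, z, ⟨hzW, hz⟩, rfl⟩ := Submodule.mem_sup.1 hx
    rw [SetLike.mem_coe, LinearMap.mem_ker, LinearMap.sub_apply, LinearMap.id_apply,
      sub_eq_zero] at hy
    rw [SetLike.mem_coe, LinearMap.mem_ker] at hz
    refine ⟨add_mem hyW hzW, ?_⟩
    rwa [map_add, hz, add_zero, ← hy]
  · rintro ⟨hxW, hfxW⟩
    refine Submodule.mem_sup.2 ⟨f x, ⟨hfxW, ?_⟩, x - f x, ⟨sub_mem hxW hfxW, ?_⟩, by abel⟩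
    · rw [SetLike.mem_coe, LinearMap.mem_ker, LinearMap.sub_apply, LinearMap.id_apply, hff,
        sub_self]
    · rw [SetLike.mem_coe, LinearMap.mem_ker, map_sub, hff, sub_self]

end Projection

variable {n : ℕ}

lemma sympOmega_comm (v w : PV n) : sympOmega v w = sympOmega w v :=
  Finset.sum_congr rfl fun _ _ => by ring

def sympForm : PV n →ₗ[ZMod 2] PV n →ₗ[ZMod 2] ZMod 2 :=
  LinearMap.mk₂ (ZMod 2) sympOmega sympOmega_add_left sympOmega_smul_left
    (fun v w₁ w₂ => by
      rw [sympOmega_comm, sympOmega_add_left, sympOmega_comm w₁, sympOmega_comm w₂])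
    (fun c v w => by rw [sympOmega_comm, sympOmega_smul_left, sympOmega_comm, smul_eq_mul])

lemma mem_sPerp_span_iff {s : Set (PV n)} {P : PV n} :
    P ∈ sPerp (Submodule.span (ZMod 2) s) ↔ ∀ Q ∈ s, sympOmega P Q = 0 :=
  Submodule.span_le (p := LinearMap.ker (sympForm P))

lemma isIdempotentElem_trunc (i : ℕ) : IsIdempotentElem (trunc n i) := by
  refine LinearMap.ext fun v => funext fun j => ?_
  by_cases h : (j : ℕ) < i <;> simp [trunc, h]

def wolffStateMap {ι : Type*} (Sgen : ι → PV n) (i : ℕ) : PV n →ₗ[ZMod 2] ι → ZMod 2 :=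
  LinearMap.pi fun j => sympForm (Sgen j) ∘ₗ trunc n i

lemma wolffStateMap_eq_zero_iff {ι : Type*} {Sgen : ι → PV n} {i : ℕ} {P : PV n} :
    wolffStateMap Sgen i P = 0 ↔
      trunc n i P ∈ sPerp (Submodule.span (ZMod 2) (Set.range Sgen)) := by
  rw [mem_sPerp_span_iff, Set.forall_mem_range, funext_iff]
  exact forall_congr' fun j => by rw [sympOmega_comm]; rfl

theorem wolff_state_map_kernel_general (n k : ℕ)
    (S : Submodule (ZMod 2) (PV n))
    (Sgen : Fin (n - k) → PV n)
    (hspan : Submodule.span (ZMod 2) (Set.range Sgen) = S)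
    (i : ℕ) :
    IsLinearMap (ZMod 2)
      (fun (P : PV n) (j : Fin (n - k)) => sympOmega (Sgen j) (trunc n i P)) ∧
    {P : PV n | P ∈ sPerp S ∧
        (fun j : Fin (n - k) => sympOmega (Sgen j) (trunc n i P)) = 0}
      = ↑((sPerp S ⊓ LinearMap.ker (LinearMap.id - trunc n i))
          ⊔ (sPerp S ⊓ LinearMap.ker (trunc n i))) ∧
    (sPerp S ⊓ LinearMap.ker (LinearMap.id - trunc n i))
        ⊓ (sPerp S ⊓ LinearMap.ker (trunc n i)) = ⊥ := by
  subst hspan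
  refine ⟨(wolffStateMap Sgen i).isLinear, ?_, ?_⟩
  · ext P
    exact (and_congr_right' wolffStateMap_eq_zero_iff).trans
      (mem_inf_ker_id_sub_sup_inf_ker_iff (isIdempotentElem_trunc i) _).symm
  · exact eq_bot_iff.2 ((inf_le_inf inf_le_right inf_le_right).trans
      (ker_id_sub_inf_ker_eq_bot _).le)

/-- Kernel of the Wolff state map fᵢ(P) = (ω(Sⱼ, πᵢ(P)))ⱼ on S^⊥: fᵢ is 𝔽₂-linear,
its kernel equals Cᵢᵖ + Cᵢᶠ, and Cᵢᵖ ∩ Cᵢᶠ = {0}. -/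
theorem wolff_state_map_kernel (n k : ℕ) (hk : k ≤ n)
    (S : Submodule (ZMod 2) (PV n))
    (Sgen : Fin (n - k) → PV n) (hind : LinearIndependent (ZMod 2) Sgen)
    (hspan : Submodule.span (ZMod 2) (Set.range Sgen) = S)
    (i : ℕ) (hi : i ≤ n) :
    IsLinearMap (ZMod 2)
      (fun (P : PV n) (j : Fin (n - k)) => sympOmega (Sgen j) (trunc n i P)) ∧
    {P : PV n | P ∈ sPerp S ∧
        (fun j : Fin (n - k) => sympOmega (Sgen j) (trunc n i P)) = 0}
      = ↑((sPerp S ⊓ LinearMap.ker (LinearMap.id - trunc n i))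
          ⊔ (sPerp S ⊓ LinearMap.ker (trunc n i))) ∧
    (sPerp S ⊓ LinearMap.ker (LinearMap.id - trunc n i))
        ⊓ (sPerp S ⊓ LinearMap.ker (trunc n i)) = ⊥ :=
  wolff_state_map_kernel_general n k S Sgen hspan i
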